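/- arXiv:1805.00512 — 2 statements merged into one kernel-verified Lean document; each statement's English description precedes it below -/
import Mathlib

section
/- In a directed-complete cone, addition is Scott-continuous: for any directed subsets D and E of C, sup{x + y : x ∈ D, y ∈ E} = sup D + sup E. -/
class PCone (C : Type*) extends AddCommMonoid C, Module NNReal C where
  cnorm : C → NNReal
  add_left_cancel' : ∀ x y y' : C, x + y = x + y' → y = y'
  cnorm_smul : ∀ (a : NNReal) (x : C), cnorm (a • x) = a * cnorm x
  cnorm_add_le : ∀ x y : C, cnorm (x + y) ≤ cnorm x + cnorm y
  cnorm_eq_zero : ∀ x : C, cnorm x = 0 → x = 0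
  cnorm_le_add : ∀ x y : C, cnorm x ≤ cnorm (x + y)

/-- The cone order: `x ≤ y` iff `y = x + z` for some `z`. -/
def cle {C : Type*} [PCone C] (x y : C) : Prop := ∃ z : C, y = x + z

/-- `b` is an upper bound of `s` for the cone order. -/
def IsUBc {C : Type*} [PCone C] (s : Set C) (b : C) : Prop := ∀ a ∈ s, cle a b

/-- `j` is a least upper bound of `s` for the cone order. -/
def IsLUBc {C : Type*} [PCone C] (s : Set C) (j : C) : Prop :=
  IsUBc s j ∧ ∀ b, IsUBc s b → cle j b

/-- `b` is a lower bound of `s` for the cone order. -/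
def IsLBc {C : Type*} [PCone C] (s : Set C) (b : C) : Prop := ∀ a ∈ s, cle b a

/-- `g` is a greatest lower bound of `s` for the cone order. -/
def IsGLBc {C : Type*} [PCone C] (s : Set C) (g : C) : Prop :=
  IsLBc s g ∧ ∀ b, IsLBc s b → cle b g

/-- `D` is directed for the cone order. -/
def DirC {C : Type*} [PCone C] (D : Set C) : Prop :=
  D.Nonempty ∧ ∀ x ∈ D, ∀ y ∈ D, ∃ z ∈ D, cle x z ∧ cle y z

/-- `D` is directed for the reverse cone order. -/
def RevDirC {C : Type*} [PCone C] (D : Set C) : Prop :=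
  D.Nonempty ∧ ∀ x ∈ D, ∀ y ∈ D, ∃ z ∈ D, cle z x ∧ cle z y

/-!
If `b` bounds every `x + y`, then by cancellativity "`b - y`" is an upper bound of `D`, so
`sD + y ≤ b` for every `y ∈ E`; the same argument applied to `E` gives `sD + sE ≤ b`.
-/

section ConeOrder

variable {C : Type*} [PCone C]

theorem cle_add_left {x y : C} (a : C) (h : cle x y) : cle (a + x) (a + y) := by
  obtain ⟨z, rfl⟩ := h
  exact ⟨z, (add_assoc a x z).symm⟩

theorem cle_add_add {a b c d : C} (hab : cle a b) (hcd : cle c d) : cle (a + c) (b + d) := by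
  obtain ⟨z, rfl⟩ := hab
  obtain ⟨w, rfl⟩ := hcd
  exact ⟨z + w, by abel⟩

theorem cle_of_add_cle_add_left {a x y : C} (h : cle (a + x) (a + y)) : cle x y := by
  obtain ⟨z, hz⟩ := h
  exact ⟨z, PCone.add_left_cancel' a _ _ (by rw [hz, add_assoc])⟩

theorem IsLUBc.add_cle_of_forall_add_cle {D : Set C} {s a b : C} (hD : D.Nonempty)
    (hs : IsLUBc D s) (h : ∀ x ∈ D, cle (a + x) b) : cle (a + s) b := by
  obtain ⟨x₀, hx₀⟩ := hD
  obtain ⟨c, rfl⟩ := h x₀ hx₀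
  have hub : IsUBc D (x₀ + c) := fun x hx =>
    cle_of_add_cle_add_left (a := a) (by rw [← add_assoc]; exact h x hx)
  simpa only [add_assoc] using cle_add_left a (hs.2 _ hub)

end ConeOrder

theorem add_scott_continuous_general {C : Type*} [PCone C]
    (D E : Set C) (hD : DirC D) (hE : DirC E)
    (sD sE : C) (hsD : IsLUBc D sD) (hsE : IsLUBc E sE) :
    IsLUBc {w : C | ∃ x ∈ D, ∃ y ∈ E, w = x + y} (sD + sE) := by
  refine ⟨?_, fun b hb => ?_⟩
  · rintro _ ⟨x, hx, y, hy, rfl⟩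
    exact cle_add_add (hsD.1 x hx) (hsE.1 y hy)
  · have hsD_add : ∀ y ∈ E, cle (sD + y) b := fun y hy => by
      rw [add_comm]
      exact hsD.add_cle_of_forall_add_cle hD.1 fun x hx => by
        rw [add_comm]
        exact hb _ ⟨x, hx, y, hy, rfl⟩
    exact hsE.add_cle_of_forall_add_cle hE.1 hsD_add

/-- In a directed-complete cone, addition is Scott-continuous:
`sup {x + y : x ∈ D, y ∈ E} = sup D + sup E` for directed `D`, `E`. -/
theorem add_scott_continuous {C : Type*} [PCone C]
    (hdc : ∀ D : Set C, (∀ x ∈ D, PCone.cnorm x ≤ 1) → DirC D →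
      ∃ s : C, PCone.cnorm s ≤ 1 ∧ IsLUBc D s)
    (D E : Set C) (hD : DirC D) (hE : DirC E)
    (sD sE : C) (hsD : IsLUBc D sD) (hsE : IsLUBc E sE) :
    IsLUBc {w : C | ∃ x ∈ D, ∃ y ∈ E, w = x + y} (sD + sE) :=
  add_scott_continuous_general D E hD hE sD sE hsD hsE
end

section
/- Let C and D be directed-complete cones and f : C → D a function that is linear (additive and commutes with scalar multiplication by ℝ≥0), non-decreasing, and satisfies f(inf F) = inf f(F) for every subset F of C directed for the reverse order. Then f is directed Scott-continuous: for every bounded directed subset E of C, f(sup E) = sup f(E). -/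
/-!
Let `s = sup E` and let `F = {z | s = x + z, x ∈ E}` be the set of gaps `s - x`; it is
reverse-directed with infimum `0`. The image `f(E)` is bounded by `f s`, so after rescaling
into the unit ball it has a supremum `t`, and `f s = t + r`. By additivity `r` lies below every
`f (s - x)`, hence below `inf f(F) = f 0 = 0`, so `r = 0`.
-/

namespace PCone

variable {C D : Type*} [PCone C] [PCone D]

theorem cnorm_zero : cnorm (0 : C) = 0 := by
  simpa using cnorm_smul (0 : NNReal) (0 : C)

theorem eq_zero_of_add_eq_zero {x y : C} (h : x + y = 0) : x = 0 :=
  cnorm_eq_zero x <| le_antisymm (by simpa [h, cnorm_zero] using cnorm_le_add x y) zero_le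

theorem eq_zero_of_cle_zero {x : C} (h : cle x 0) : x = 0 :=
  let ⟨_, hz⟩ := h
  eq_zero_of_add_eq_zero hz.symm

theorem eq_zero_of_add_cle_self {x b : C} (h : cle (x + b) x) : b = 0 := by
  obtain ⟨u, hu⟩ := h
  refine eq_zero_of_add_eq_zero (y := u) (add_left_cancel' x _ _ ?_).symm
  rw [add_zero, ← add_assoc]
  exact hu

theorem cle_refl (x : C) : cle x x := ⟨0, (add_zero x).symm⟩

theorem cle_smul (a : NNReal) {x y : C} (h : cle x y) : cle (a • x) (a • y) :=
  let ⟨z, hz⟩ := h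
  ⟨a • z, by rw [hz, smul_add]⟩

theorem cnorm_le_of_cle {x y : C} (h : cle x y) : cnorm x ≤ cnorm y := by
  obtain ⟨z, rfl⟩ := h
  exact cnorm_le_add x z

theorem map_zero_of_additive {f : C → D} (hadd : ∀ x y, f (x + y) = f x + f y) : f 0 = 0 :=
  (add_left_cancel' (f 0) _ _ (by rw [← hadd, add_zero, add_zero])).symm

theorem _root_.IsUBc.image {g : C → D} (hg : ∀ x y, cle x y → cle (g x) (g y))
    {S : Set C} {b : C} (h : IsUBc S b) : IsUBc (g '' S) (g b) := by
  rintro _ ⟨x, hx, rfl⟩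
  exact hg x b (h x hx)

theorem _root_.DirC.image {g : C → D} (hg : ∀ x y, cle x y → cle (g x) (g y)) {S : Set C}
    (hS : DirC S) : DirC (g '' S) := by
  refine ⟨hS.1.image g, ?_⟩
  rintro _ ⟨x, hx, rfl⟩ _ ⟨y, hy, rfl⟩
  obtain ⟨z, hz, hxz, hyz⟩ := hS.2 x hx y hy
  exact ⟨g z, ⟨z, hz, rfl⟩, hg x z hxz, hg y z hyz⟩

theorem isLUBc_smul_image {S : Set C} {t : C} {a : NNReal} (ha : a ≠ 0) (h : IsLUBc S t) :
    IsLUBc ((a • ·) '' S) (a • t) := by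
  refine ⟨h.1.image fun _ _ => cle_smul a, fun b hb => ?_⟩
  have hb' : IsUBc S (a⁻¹ • b) := fun x hx => by
    simpa [inv_smul_smul₀ ha] using cle_smul a⁻¹ (hb (a • x) ⟨x, hx, rfl⟩)
  simpa [smul_inv_smul₀ ha] using cle_smul a (h.2 _ hb')

theorem exists_isLUBc_of_isUBc
    (hdc : ∀ S : Set C, (∀ x ∈ S, cnorm x ≤ 1) → DirC S → ∃ s : C, cnorm s ≤ 1 ∧ IsLUBc S s)
    {S : Set C} {b : C} (hS : DirC S) (hb : IsUBc S b) : ∃ t, IsLUBc S t := by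
  set a : NNReal := (cnorm b + 1)⁻¹
  have ha : a ≠ 0 := inv_ne_zero (by positivity)
  have hball : ∀ y ∈ (a • ·) '' S, cnorm y ≤ 1 := by
    rintro _ ⟨x, hx, rfl⟩
    calc cnorm (a • x) = a * cnorm x := cnorm_smul a x
      _ ≤ a * (cnorm b + 1) := by
          gcongr; exact (cnorm_le_of_cle (hb x hx)).trans (le_add_of_nonneg_right zero_le)
      _ = 1 := inv_mul_cancel₀ (by positivity)
  obtain ⟨u, -, hu⟩ := hdc _ hball (hS.image fun _ _ => cle_smul a)
  refine ⟨a⁻¹ • u, ?_⟩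
  simpa [Set.image_image, inv_smul_smul₀ ha] using isLUBc_smul_image (inv_ne_zero ha) hu

/-- `{s - x | x ∈ E}`, written without subtraction. -/
def supGaps (E : Set C) (s : C) : Set C := {z | ∃ x ∈ E, s = x + z}

theorem revDirC_supGaps {E : Set C} {s : C} (hE : DirC E) (hs : IsUBc E s) :
    RevDirC (supGaps E s) := by
  refine ⟨?_, ?_⟩
  · obtain ⟨x, hx⟩ := hE.1
    obtain ⟨z, hz⟩ := hs x hx
    exact ⟨z, x, hx, hz⟩
  · rintro z₁ ⟨x₁, hx₁, h₁⟩ z₂ ⟨x₂, hx₂, h₂⟩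
    obtain ⟨x₃, hx₃, ⟨w₁, hw₁⟩, ⟨w₂, hw₂⟩⟩ := hE.2 x₁ hx₁ x₂ hx₂
    obtain ⟨z₃, hz₃⟩ := hs x₃ hx₃
    refine ⟨z₃, ⟨x₃, hx₃, hz₃⟩, ⟨w₁, add_left_cancel' x₁ _ _ ?_⟩, ⟨w₂, add_left_cancel' x₂ _ _ ?_⟩⟩
    · rw [← h₁, hz₃, hw₁, add_assoc, add_comm z₃ w₁]
    · rw [← h₂, hz₃, hw₂, add_assoc, add_comm z₃ w₂]

theorem isGLBc_supGaps {E : Set C} {s : C} (hE : E.Nonempty) (hs : IsLUBc E s) :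
    IsGLBc (supGaps E s) 0 := by
  refine ⟨fun z _ => ⟨z, (zero_add z).symm⟩, fun b hb => ?_⟩
  have hle : ∀ x ∈ E, ∃ w, s = b + (x + w) := fun x hx => by
    obtain ⟨z, hz⟩ := hs.1 x hx
    obtain ⟨w, hw⟩ := hb z ⟨x, hx, hz⟩
    exact ⟨w, by rw [hz, hw, add_left_comm]⟩
  obtain ⟨x₀, hx₀⟩ := hE
  obtain ⟨w₀, hs₀⟩ := hle x₀ hx₀
  -- `s = b + c` with `c = x₀ + w₀` an upper bound of `E`, so `s + b ≤ c + b = s` forces `b = 0`.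
  have hc : IsUBc E (x₀ + w₀) := fun x hx => by
    obtain ⟨w, hsx⟩ := hle x hx
    exact ⟨w, add_left_cancel' b _ _ (hs₀.symm.trans hsx)⟩
  obtain ⟨t, ht⟩ := hs.2 _ hc
  obtain rfl : b = 0 :=
    eq_zero_of_add_cle_self (x := s) ⟨t, by rw [add_right_comm, ← ht, add_comm, ← hs₀]⟩
  exact cle_refl 0

theorem isLBc_image_supGaps {f : C → D} (hadd : ∀ x y, f (x + y) = f x + f y)
    {E : Set C} {s : C} {t r : D} (ht : IsUBc (f '' E) t) (hr : f s = t + r) :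
    IsLBc (f '' supGaps E s) r := by
  rintro _ ⟨z, ⟨x, hx, hs⟩, rfl⟩
  obtain ⟨w, hw⟩ := ht (f x) ⟨x, hx, rfl⟩
  refine ⟨w, add_left_cancel' (f x) _ _ ?_⟩
  rw [← hadd, ← hs, hr, hw, add_assoc, add_comm r w]

end PCone

open PCone

theorem linear_inf_preserving_is_scott_continuous_general
    {C D : Type*} [PCone C] [PCone D]
    (hdcD : ∀ S : Set D, (∀ x ∈ S, PCone.cnorm x ≤ 1) → DirC S →
      ∃ s : D, PCone.cnorm s ≤ 1 ∧ IsLUBc S s)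
    (f : C → D)
    (hadd : ∀ x y : C, f (x + y) = f x + f y)
    (hmono : ∀ x y : C, cle x y → cle (f x) (f y))
    (hinf : ∀ (F : Set C) (g : C), RevDirC F → IsGLBc F g →
      IsGLBc (f '' F) (f g)) :
    ∀ (E : Set C) (s : C), DirC E → (∃ b : C, IsUBc E b) → IsLUBc E s →
      IsLUBc (f '' E) (f s) := by
  intro E s hE _ hs
  have hfs : IsUBc (f '' E) (f s) := hs.1.image hmono
  obtain ⟨t, ht⟩ := exists_isLUBc_of_isUBc hdcD (hE.image hmono) hfs
  obtain ⟨r, hr⟩ := ht.2 _ hfs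
  have hinf_gaps : IsGLBc (f '' supGaps E s) 0 := by
    simpa [map_zero_of_additive hadd] using
      hinf _ 0 (revDirC_supGaps hE hs.1) (isGLBc_supGaps hE.1 hs)
  have hr0 : r = 0 :=
    eq_zero_of_cle_zero (hinf_gaps.2 r (isLBc_image_supGaps hadd ht.1 hr))
  rwa [hr, hr0, add_zero]

/-- A linear, non-decreasing function between directed-complete cones that
preserves infima of reverse-directed subsets is directed Scott-continuous. -/
theorem linear_inf_preserving_is_scott_continuous
    {C D : Type*} [PCone C] [PCone D]
    (hdcC : ∀ S : Set C, (∀ x ∈ S, PCone.cnorm x ≤ 1) → DirC S →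
      ∃ s : C, PCone.cnorm s ≤ 1 ∧ IsLUBc S s)
    (hdcD : ∀ S : Set D, (∀ x ∈ S, PCone.cnorm x ≤ 1) → DirC S →
      ∃ s : D, PCone.cnorm s ≤ 1 ∧ IsLUBc S s)
    (f : C → D)
    (hadd : ∀ x y : C, f (x + y) = f x + f y)
    (hsmul : ∀ (a : NNReal) (x : C), f (a • x) = a • f x)
    (hmono : ∀ x y : C, cle x y → cle (f x) (f y))
    (hinf : ∀ (F : Set C) (g : C), RevDirC F → IsGLBc F g →
      IsGLBc (f '' F) (f g)) :
    ∀ (E : Set C) (s : C), DirC E → (∃ b : C, IsUBc E b) → IsLUBc E s →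
      IsLUBc (f '' E) (f s) :=
  linear_inf_preserving_is_scott_continuous_general hdcD f hadd hmono hinf
end
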